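/- arXiv:2103.00071 — 2 statements merged into one kernel-verified Lean document; each statement's English description precedes it below -/
import Mathlib

section
/- (The well-calibrated imprecise Bayesian, strong version.) Let Γ be any forecasting system and let 𝒯 be any countable collection of test supermartingales for Γ. Then the set A^c := {ω ∈ {0,1}^ℕ : some T ∈ 𝒯 satisfies sup_n T(ω^n) = ∞} has global upper probability zero: P̄_Γ(A^c) = 0. In other words, almost all paths are random with respect to 𝒯, for the imprecise probability tree corresponding to Γ. -/
open Filter

noncomputable section

/-- Situations: finite binary strings. -/
abbrev Situation : Type := List Bool

/-- Paths: infinite binary sequences. -/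
abbrev BitPath : Type := ℕ → Bool

/-- The first `n` outcomes of a path. -/
def pref (ω : BitPath) (n : ℕ) : Situation := (List.range n).map ω

/-- The real value of a bit. -/
def bval (b : Bool) : ℝ := if b then 1 else 0

/-- Precise expectation of a gamble on `{0,1}` with respect to a forecast `p`. -/
def Ep (p : ℝ) (f : Bool → ℝ) : ℝ := p * f true + (1 - p) * f false

/-- Interval forecast: a nonempty closed subinterval of `[0,1]`. -/
def IsForecast (I : Set ℝ) : Prop :=
  ∃ l u : ℝ, 0 ≤ l ∧ l ≤ u ∧ u ≤ 1 ∧ I = Set.Icc l u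

/-- Upper expectation associated with an interval forecast. -/
def upperExp (I : Set ℝ) (f : Bool → ℝ) : ℝ := sSup ((fun p => Ep p f) '' I)

/-- Lower expectation associated with an interval forecast. -/
def lowerExp (I : Set ℝ) (f : Bool → ℝ) : ℝ := sInf ((fun p => Ep p f) '' I)

/-- Forecasting systems. -/
abbrev ForecastingSystem : Type := Situation → Set ℝ

def IsForecastingSystem (Γ : ForecastingSystem) : Prop := ∀ s, IsForecast (Γ s)

/-- Supermartingale for a forecasting system. -/
def Supermartingale (Γ : ForecastingSystem) (M : Situation → ℝ) : Prop :=
  ∀ s : Situation, upperExp (Γ s) (fun x => M (s ++ [x]) - M s) ≤ 0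

/-- Submartingale for a forecasting system. -/
def Submartingale (Γ : ForecastingSystem) (M : Situation → ℝ) : Prop :=
  ∀ s : Situation, 0 ≤ lowerExp (Γ s) (fun x => M (s ++ [x]) - M s)

/-- Test process: nonnegative with unit initial value. -/
def TestProcess (M : Situation → ℝ) : Prop := (∀ s, 0 ≤ M s) ∧ M [] = 1

/-- Test supermartingale. -/
def TestSupermartingale (Γ : ForecastingSystem) (M : Situation → ℝ) : Prop :=
  TestProcess M ∧ Supermartingale Γ M

/-- Computable real process. -/
def ComputableProcess (F : Situation → ℝ) : Prop :=
  ∃ r : Situation × ℕ → ℚ, ∃ e : Situation × ℕ → ℕ,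
    Computable r ∧ Computable e ∧
    ∀ s n N, e (s, N) ≤ n → |(r (s, n) : ℝ) - F s| ≤ (2 : ℝ) ^ (-(N : ℤ))

/-- Lower semicomputable real process. -/
def LowerSemicomputableProcess (F : Situation → ℝ) : Prop :=
  ∃ r : Situation × ℕ → ℚ, Computable r ∧
    (∀ s n, r (s, n) ≤ r (s, n + 1)) ∧
    ∀ s, Filter.Tendsto (fun n => (r (s, n) : ℝ)) Filter.atTop (nhds (F s))

def UpperSemicomputableProcess (F : Situation → ℝ) : Prop :=
  LowerSemicomputableProcess (fun s => -F s)

def ComputableReal (x : ℝ) : Prop := ComputableProcess (fun _ => x)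
def LowerSemicomputableReal (x : ℝ) : Prop := LowerSemicomputableProcess (fun _ => x)
def UpperSemicomputableReal (x : ℝ) : Prop := UpperSemicomputableProcess (fun _ => x)

/-- Computable real sequence. -/
def ComputableSeq (τ : ℕ → ℝ) : Prop :=
  ∃ r : ℕ × ℕ → ℚ, ∃ e : ℕ × ℕ → ℕ,
    Computable r ∧ Computable e ∧
    ∀ k n N, e (k, N) ≤ n → |(r (k, n) : ℝ) - τ k| ≤ (2 : ℝ) ^ (-(N : ℤ))

/-- Computable forecasting system. -/
def ComputableForecastingSystem (Γ : ForecastingSystem) : Prop :=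
  ComputableProcess (fun s => sInf (Γ s)) ∧ ComputableProcess (fun s => sSup (Γ s))

/-- Growth function: computable, nondecreasing and unbounded. -/
def GrowthFunction (ρ : ℕ → ℕ) : Prop :=
  Computable ρ ∧ Monotone ρ ∧ ∀ m : ℕ, ∃ n, m < ρ n

/-- Real growth function: computable, nondecreasing, nonnegative and unbounded. -/
def RealGrowthFunction (τ : ℕ → ℝ) : Prop :=
  ComputableSeq τ ∧ Monotone τ ∧ (∀ n, 0 ≤ τ n) ∧ ∀ B : ℝ, ∃ n, B < τ n

/-- Computably unbounded real-valued map. -/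
def ComputablyUnbounded (μ : ℕ → ℝ) : Prop :=
  ∃ ρ : ℕ → ℕ, GrowthFunction ρ ∧
    (0 : EReal) < Filter.limsup (fun n => ((μ n - (ρ n : ℝ) : ℝ) : EReal)) Filter.atTop

def ComputablyUnboundedOn (T : Situation → ℝ) (ω : BitPath) : Prop :=
  ComputablyUnbounded (fun n => T (pref ω n))

def BoundedAboveOn (T : Situation → ℝ) (ω : BitPath) : Prop :=
  ∃ B : ℝ, ∀ n, T (pref ω n) ≤ B

/-- Schnorr randomness of a path for a forecasting system. -/
def SchnorrRandom (ω : BitPath) (Γ : ForecastingSystem) : Prop :=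
  ∀ T : Situation → ℝ, ComputableProcess T → TestSupermartingale Γ T →
    ¬ ComputablyUnboundedOn T ω

/-- Computable randomness of a path for a forecasting system. -/
def ComputablyRandom (ω : BitPath) (Γ : ForecastingSystem) : Prop :=
  ∀ T : Situation → ℝ, ComputableProcess T → TestSupermartingale Γ T →
    BoundedAboveOn T ω

/-- Global upper expectation. -/
def upperExpGlobal (Γ : ForecastingSystem) (g : BitPath → ℝ) : ℝ :=
  sInf {x : ℝ | ∃ M : Situation → ℝ, Supermartingale Γ M ∧ x = M [] ∧
    ∀ ω : BitPath, (g ω : EReal) ≤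
      Filter.liminf (fun n => ((M (pref ω n) : ℝ) : EReal)) Filter.atTop}

/-- Global lower expectation. -/
def lowerExpGlobal (Γ : ForecastingSystem) (g : BitPath → ℝ) : ℝ :=
  sSup {x : ℝ | ∃ M : Situation → ℝ, Submartingale Γ M ∧ x = M [] ∧
    ∀ ω : BitPath,
      Filter.limsup (fun n => ((M (pref ω n) : ℝ) : EReal)) Filter.atTop ≤ (g ω : EReal)}

/-- Global upper probability. -/
def upperProb (Γ : ForecastingSystem) (A : Set BitPath) : ℝ :=
  upperExpGlobal Γ (Set.indicator A fun _ => 1)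

/-- Number of selected situations along (the prefixes of) a situation. -/
def selSum (S : Situation → Bool) (s : Situation) : ℝ :=
  ∑ k ∈ Finset.range s.length, bval (S (s.take k))

/-- Selected average of process differences along a situation. -/
def selAvg (S : Situation → Bool) (M : Situation → ℝ) (s : Situation) : ℝ :=
  if 0 < selSum S s then
    (∑ k ∈ Finset.range s.length,
      bval (S (s.take k)) * (M (s.take (k + 1)) - M (s.take k))) / selSum S s
  else 0

/-- Cylinder set of a situation. -/
def cyl (t : Situation) : Set BitPath := {ω | pref ω t.length = t}

/-- Lawful path. -/
def Lawful (ω : BitPath) : Prop :=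
  ∃ R : Situation →. List Situation, Partrec R ∧
    ∀ m : ℕ, ∃ L : List Situation, L ∈ R (pref ω m) ∧
      L ≠ [] ∧
      (∀ t ∈ L, pref ω m <+: t ∧ pref ω m ≠ t) ∧
      ((⋃ t ∈ L, cyl t) ⊂ cyl (pref ω m)) ∧
      ∃ t ∈ L, ω ∈ cyl t


section AuxLemmas

open Filter

lemma Ep_le_max {l u : ℝ} (f : Bool → ℝ) {p : ℝ} (hp : p ∈ Set.Icc l u) :
    Ep p f ≤ max (Ep l f) (Ep u f) := by
  obtain ⟨h1, h2⟩ := hp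
  rcases le_total (f true) (f false) with h | h
  · refine le_trans ?_ (le_max_left _ _)
    unfold Ep; nlinarith
  · refine le_trans ?_ (le_max_right _ _)
    unfold Ep; nlinarith

lemma bddAbove_img {l u : ℝ} (f : Bool → ℝ) :
    BddAbove ((fun p => Ep p f) '' Set.Icc l u) := by
  refine ⟨max (Ep l f) (Ep u f), ?_⟩
  rintro y ⟨p, hp, rfl⟩
  exact Ep_le_max f hp

lemma ep_le_upperExp {l u : ℝ} (f : Bool → ℝ) {p : ℝ} (hp : p ∈ Set.Icc l u) :
    Ep p f ≤ upperExp (Set.Icc l u) f :=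
  le_csSup (bddAbove_img f) ⟨p, hp, rfl⟩

lemma upperExp_le' {l u : ℝ} (hlu : l ≤ u) (f : Bool → ℝ) {c : ℝ}
    (h : ∀ p ∈ Set.Icc l u, Ep p f ≤ c) : upperExp (Set.Icc l u) f ≤ c :=
  csSup_le ⟨Ep l f, ⟨l, ⟨le_refl l, hlu⟩, rfl⟩⟩ (by rintro y ⟨p, hp, rfl⟩; exact h p hp)

lemma Ep_mono {p : ℝ} (hp0 : 0 ≤ p) (hp1 : p ≤ 1) {f g : Bool → ℝ}
    (h : ∀ x, f x ≤ g x) : Ep p f ≤ Ep p g := by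
  have ht := h true; have hf := h false
  unfold Ep; nlinarith

lemma Ep_smul (p c : ℝ) (g : Bool → ℝ) : Ep p (fun x => c * g x) = c * Ep p g := by
  unfold Ep; ring

lemma pref_length (ω : BitPath) (n : ℕ) : (pref ω n).length = n := by
  simp [pref]

lemma pref_take (ω : BitPath) {n m : ℕ} (h : n ≤ m) :
    (pref ω m).take n = pref ω n := by
  simp [pref, ← List.map_take, List.take_range, Nat.min_eq_left h]

lemma pref_succ (ω : BitPath) (n : ℕ) : pref ω (n + 1) = pref ω n ++ [ω n] := by
  simp [pref, List.range_succ]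

open scoped Classical in
/-- Auxiliary process: a delayed, renormalized and frozen-capped version of `T`. -/
def PP (ε : ℝ) (T : Situation → ℝ) (k : ℕ) (s : Situation) : ℝ :=
  if s.length ≤ k then ε * (1/2) ^ (k+1)
  else if ∃ n, k < n ∧ n ≤ s.length ∧
      max (T (s.take k)) 1 ≤ ε * (1/2) ^ (k+1) * T (s.take n) then 1
  else ε * (1/2) ^ (k+1) * T s / max (T (s.take k)) 1

lemma w_pos {ε : ℝ} (hε0 : 0 < ε) (k : ℕ) : 0 < ε * (1/2 : ℝ) ^ (k+1) := by positivity

lemma w_le_one {ε : ℝ} (hε0 : 0 < ε) (hε1 : ε ≤ 1) (k : ℕ) :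
    ε * (1/2 : ℝ) ^ (k+1) ≤ 1 := by
  have h1 : (1/2 : ℝ) ^ (k+1) ≤ 1 := by
    apply pow_le_one₀ <;> norm_num
  nlinarith

lemma C_pos (T : Situation → ℝ) (k : ℕ) (s : Situation) :
    (0 : ℝ) < max (T (s.take k)) 1 := lt_of_lt_of_le zero_lt_one (le_max_right _ _)

lemma PP_nonneg {ε : ℝ} (hε0 : 0 < ε) {T : Situation → ℝ} (hT : ∀ t, 0 ≤ T t)
    (k : ℕ) (s : Situation) : 0 ≤ PP ε T k s := by
  unfold PP
  split_ifs with h1 h2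
  · positivity
  · norm_num
  · exact div_nonneg (mul_nonneg (by positivity) (hT s)) (C_pos T k s).le

lemma PP_const {ε : ℝ} (T : Situation → ℝ) {k : ℕ} {s : Situation}
    (h : s.length ≤ k) : PP ε T k s = ε * (1/2) ^ (k+1) := by
  unfold PP; rw [if_pos h]

lemma PP_le_one {ε : ℝ} (hε0 : 0 < ε) (hε1 : ε ≤ 1) {T : Situation → ℝ}
    (hT : ∀ t, 0 ≤ T t) (k : ℕ) (s : Situation) : PP ε T k s ≤ 1 := by
  unfold PP
  split_ifs with h1 h2
  · exact w_le_one hε0 hε1 k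
  · exact le_refl 1
  · push_neg at h1 h2
    have h3 := h2 s.length h1 (le_refl _)
    rw [List.take_length] at h3
    rw [div_le_one (C_pos T k s)]
    exact h3.le

lemma PP_step {ε : ℝ} (hε0 : 0 < ε) (hε1 : ε ≤ 1) {T : Situation → ℝ}
    (hT : ∀ t, 0 ≤ T t) {p : ℝ} (hp0 : 0 ≤ p) (hp1 : p ≤ 1) (k : ℕ) (s : Situation)
    (hsup : Ep p (fun x => T (s ++ [x]) - T s) ≤ 0) :
    Ep p (fun x => PP ε T k (s ++ [x]) - PP ε T k s) ≤ 0 := by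
  classical
  set w := ε * (1/2 : ℝ) ^ (k+1) with hw
  have hw0 : 0 < w := w_pos hε0 k
  have hlen : ∀ x : Bool, (s ++ [x]).length = s.length + 1 := by simp
  by_cases hA : s.length + 1 ≤ k
  · have e1 : ∀ x : Bool, PP ε T k (s ++ [x]) = w := by
      intro x; exact PP_const T (by rw [hlen]; exact hA)
    have e2 : PP ε T k s = w := PP_const T (by omega)
    simp only [e1, e2, sub_self]
    simp [Ep]
  · have hkL : k ≤ s.length := by omega
    have htk : ∀ x : Bool, (s ++ [x]).take k = s.take k :=
      fun x => List.take_append_of_le_length hkL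
    set C := max (T (s.take k)) 1 with hC
    have hC0 : (0:ℝ) < C := C_pos T k s
    by_cases hF : ∃ n, k < n ∧ n ≤ s.length ∧ C ≤ w * T (s.take n)
    · -- frozen: everything equal to 1
      obtain ⟨n, hn1, hn2, hn3⟩ := hF
      have hkL' : k < s.length := by omega
      have e2 : PP ε T k s = 1 := by
        unfold PP
        rw [if_neg (by omega), if_pos ⟨n, hn1, hn2, hn3⟩]
      have e1 : ∀ x : Bool, PP ε T k (s ++ [x]) = 1 := by
        intro x
        unfold PP
        rw [if_neg (by rw [hlen]; omega), if_pos ?_]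
        refine ⟨n, hn1, by rw [hlen]; omega, ?_⟩
        rw [List.take_append_of_le_length hn2, htk x]
        exact hn3
      simp only [e1, e2, sub_self]
      simp [Ep]
    · -- not frozen
      have hPs : w * T s / C ≤ PP ε T k s := by
        rcases eq_or_lt_of_le hkL with heq | hlt
        · have hss : s.take k = s := by rw [heq, List.take_length]
          have e2 : PP ε T k s = w := PP_const T (le_of_eq heq.symm)
          rw [e2, div_le_iff₀ hC0]
          have hTs : T s ≤ C := by rw [hC, hss]; exact le_max_left _ _
          nlinarith [hT s]
        · have e2 : PP ε T k s = w * T s / C := by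
            unfold PP
            rw [if_neg (by omega), if_neg hF]
          exact le_of_eq e2.symm
      have hchild : ∀ x : Bool, PP ε T k (s ++ [x]) ≤ w * T (s ++ [x]) / C := by
        intro x
        unfold PP
        rw [if_neg (by rw [hlen]; omega)]
        rw [htk x, hlen]
        split_ifs with h2
        · obtain ⟨n, hn1, hn2, hn3⟩ := h2
          rcases lt_or_eq_of_le hn2 with hlt | heq
          · exfalso
            apply hF
            have hle : n ≤ s.length := by omega
            refine ⟨n, hn1, hle, ?_⟩
            rwa [List.take_append_of_le_length hle] at hn3
          · rw [heq] at hn3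
            have : (s ++ [x]).take (s.length + 1) = s ++ [x] := by
              rw [← hlen x, List.take_length]
            rw [this] at hn3
            rw [le_div_iff₀ hC0]
            rw [← hw, ← hC] at hn3
            linarith
        · exact le_refl _
      have hmono : Ep p (fun x => PP ε T k (s ++ [x]) - PP ε T k s)
          ≤ Ep p (fun x => (w / C) * (T (s ++ [x]) - T s)) := by
        apply Ep_mono hp0 hp1
        intro x
        have h1 := hchild x
        have h2 := hPs
        have : (w / C) * (T (s ++ [x]) - T s) = w * T (s ++ [x]) / C - w * T s / C := by
          field_simp
        rw [this]
        linarith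
      calc Ep p (fun x => PP ε T k (s ++ [x]) - PP ε T k s)
          ≤ Ep p (fun x => (w / C) * (T (s ++ [x]) - T s)) := hmono
        _ = (w / C) * Ep p (fun x => T (s ++ [x]) - T s) := Ep_smul p (w / C) _
        _ ≤ 0 := mul_nonpos_of_nonneg_of_nonpos (div_nonneg hw0.le hC0.le) hsup

lemma PP_summable {ε : ℝ} (hε0 : 0 < ε) (f : ℕ → Situation → ℝ) (s : Situation) :
    Summable (fun k => PP ε (f k) k s) := by
  have h1 : Summable (fun k : ℕ => ε * (1/2 : ℝ) ^ (k+1)) := by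
    have := (summable_geometric_of_lt_one (by norm_num : (0:ℝ) ≤ 1/2)
      (by norm_num : (1/2:ℝ) < 1)).mul_left (ε * (1/2))
    apply this.congr
    intro k
    rw [pow_succ]
    ring
  have h2 : Summable (fun k : ℕ => PP ε (f k) k s - ε * (1/2 : ℝ) ^ (k+1)) := by
    apply summable_of_ne_finset_zero (s := Finset.range s.length)
    intro k hk
    have hks : s.length ≤ k := by
      simpa using Finset.mem_range.not.mp hk
    rw [PP_const (f k) hks, sub_self]
  apply (h1.add h2).congr
  intro k
  ring

lemma one_test (Γ : ForecastingSystem) (hΓ : IsForecastingSystem Γ) :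
    TestSupermartingale Γ (fun _ => 1) := by
  refine ⟨⟨fun _ => zero_le_one, rfl⟩, fun s => ?_⟩
  obtain ⟨l, u, hl0, hlu, hu1, hIcc⟩ := hΓ s
  rw [hIcc]
  apply upperExp_le' hlu
  intro p hp
  simp [Ep]

lemma exists_super (Γ : ForecastingSystem) (hΓ : IsForecastingSystem Γ)
    (f : ℕ → Situation → ℝ) (hf : ∀ k, TestSupermartingale Γ (f k))
    {ε : ℝ} (hε0 : 0 < ε) (hε1 : ε ≤ 1) :
    ∃ M : Situation → ℝ, Supermartingale Γ M ∧ M [] = ε ∧ (∀ s, 0 ≤ M s) ∧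
      ∀ ω : BitPath, (∃ k, ∀ B : ℝ, ∃ n, B < f k (pref ω n)) →
        ∀ᶠ m in atTop, (1:ℝ) ≤ M (pref ω m) := by
  classical
  have hTnn : ∀ k t, 0 ≤ f k t := fun k => ((hf k).1).1
  have hsum : ∀ s, Summable (fun k => PP ε (f k) k s) := PP_summable hε0 f
  refine ⟨fun s => ∑' k, PP ε (f k) k s, ?_, ?_, ?_, ?_⟩
  · -- supermartingale
    intro s
    obtain ⟨l, u, hl0, hlu, hu1, hIcc⟩ := hΓ s
    rw [hIcc]
    apply upperExp_le' hlu
    intro p hp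
    have hp0 : 0 ≤ p := hl0.trans hp.1
    have hp1 : p ≤ 1 := hp.2.trans hu1
    have hdiff : ∀ x : Bool,
        (∑' k, PP ε (f k) k (s ++ [x])) - ∑' k, PP ε (f k) k s
          = ∑' k, (PP ε (f k) k (s ++ [x]) - PP ε (f k) k s) :=
      fun x => (Summable.tsum_sub (hsum _) (hsum s)).symm
    have hsub : ∀ x : Bool,
        Summable (fun k => PP ε (f k) k (s ++ [x]) - PP ε (f k) k s) :=
      fun x => (hsum _).sub (hsum s)
    have key : Ep p (fun x => (∑' k, PP ε (f k) k (s ++ [x])) - ∑' k, PP ε (f k) k s)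
        = ∑' k, Ep p (fun x => PP ε (f k) k (s ++ [x]) - PP ε (f k) k s) := by
      simp only [Ep]
      rw [hdiff true, hdiff false, ← tsum_mul_left, ← tsum_mul_left,
        ← Summable.tsum_add ((hsub true).mul_left p) ((hsub false).mul_left (1 - p))]
    rw [key]
    apply tsum_nonpos
    intro k
    apply PP_step hε0 hε1 (hTnn k) hp0 hp1 k s
    have h := (hf k).2 s
    rw [hIcc] at h
    exact le_trans (ep_le_upperExp _ hp) h
  · -- value at root
    show (∑' k, PP ε (f k) k ([] : Situation)) = ε
    have e1 : ∀ k : ℕ, PP ε (f k) k [] = ε * (1/2) ^ (k+1) :=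
      fun k => PP_const (f k) (by simp)
    rw [tsum_congr e1]
    have e2 : ∀ k : ℕ, ε * (1/2 : ℝ) ^ (k+1) = (ε * (1/2)) * (1/2) ^ k := by
      intro k; rw [pow_succ]; ring
    rw [tsum_congr e2, tsum_mul_left,
      tsum_geometric_of_lt_one (by norm_num : (0:ℝ) ≤ 1/2) (by norm_num : (1/2:ℝ) < 1)]
    norm_num
    ring
  · -- nonneg
    intro s
    exact tsum_nonneg (fun k => PP_nonneg hε0 (hTnn k) k s)
  · -- eventual lower bound on unbounded paths
    rintro ω ⟨k, hk⟩
    set T := f k with hT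
    set w := ε * (1/2 : ℝ) ^ (k+1) with hw
    have hw0 : 0 < w := w_pos hε0 k
    set C := max (T (pref ω k)) 1 with hC
    have hC0 : (0:ℝ) < C := lt_of_lt_of_le zero_lt_one (le_max_right _ _)
    obtain ⟨n₀, hn₀⟩ := hk (C / w + ∑ j ∈ Finset.range (k+1), T (pref ω j))
    have hsum0 : (0:ℝ) ≤ ∑ j ∈ Finset.range (k+1), T (pref ω j) :=
      Finset.sum_nonneg (fun j _ => hTnn k _)
    have hkn : k < n₀ := by
      by_contra h
      push_neg at h
      have h1 : T (pref ω n₀) ≤ ∑ j ∈ Finset.range (k+1), T (pref ω j) :=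
        Finset.single_le_sum (fun j _ => hTnn k _) (Finset.mem_range.2 (by omega))
      have h2 : 0 ≤ C / w := div_nonneg hC0.le hw0.le
      linarith
    have hCw : C ≤ w * T (pref ω n₀) := by
      have h3 : C / w < T (pref ω n₀) := by linarith
      rw [div_lt_iff₀ hw0] at h3
      nlinarith
    filter_upwards [eventually_ge_atTop n₀] with m hm
    have h1 : PP ε T k (pref ω m) = 1 := by
      unfold PP
      rw [if_neg (by rw [pref_length]; omega), if_pos ?_]
      refine ⟨n₀, hkn, by rw [pref_length]; omega, ?_⟩
      rw [pref_take ω (le_trans hkn.le hm), pref_take ω hm]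
      exact hCw
    calc (1:ℝ) = PP ε T k (pref ω m) := h1.symm
      _ ≤ ∑' j, PP ε (f j) j (pref ω m) :=
          Summable.le_tsum (hsum _) k (fun j _ => PP_nonneg hε0 (hTnn j) j _)

lemma elem_nonneg (Γ : ForecastingSystem) (hΓ : IsForecastingSystem Γ)
    {M : Situation → ℝ} (hM : Supermartingale Γ M)
    (hlim : ∀ ω : BitPath,
      (0 : EReal) ≤ Filter.liminf (fun n => ((M (pref ω n) : ℝ) : EReal)) Filter.atTop) :
    0 ≤ M [] := by
  have hstep : ∀ s : Situation, ∃ x : Bool, M (s ++ [x]) ≤ M s := by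
    intro s
    obtain ⟨l, u, hl0, hlu, hu1, hIcc⟩ := hΓ s
    have h := hM s
    rw [hIcc] at h
    have hEp : Ep l (fun x => M (s ++ [x]) - M s) ≤ 0 :=
      le_trans (ep_le_upperExp _ ⟨le_refl l, hlu⟩) h
    by_cases hfa : M (s ++ [false]) ≤ M s
    · exact ⟨false, hfa⟩
    · refine ⟨true, ?_⟩
      push_neg at hfa
      by_contra ht
      push_neg at ht
      have hl1 : l ≤ 1 := hlu.trans hu1
      unfold Ep at hEp
      set a := M (s ++ [true]) - M s with ha'
      set b := M (s ++ [false]) - M s with hb'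
      have ha : 0 < a := sub_pos.2 ht
      have hb : 0 < b := sub_pos.2 hfa
      have hmin : min a b ≤ l * a + (1 - l) * b := by
        nlinarith [min_le_left a b, min_le_right a b,
          mul_nonneg hl0 (sub_nonneg.2 (min_le_left a b)),
          mul_nonneg (sub_nonneg.2 hl1) (sub_nonneg.2 (min_le_right a b))]
      have hm0 : 0 < min a b := lt_min ha hb
      linarith
  choose g hg using hstep
  let sit : ℕ → Situation := fun n => Nat.rec [] (fun _ t => t ++ [g t]) n
  let ω : BitPath := fun n => g (sit n)
  have hsit : ∀ n, pref ω n = sit n := by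
    intro n
    induction n with
    | zero => simp [pref, sit]
    | succ n ih => rw [pref_succ, ih]
  have hmon : ∀ n, M (sit n) ≤ M [] := by
    intro n
    induction n with
    | zero => exact le_refl _
    | succ n ih => exact le_trans (hg (sit n)) ih
  have h2 : Filter.liminf (fun n => ((M (pref ω n) : ℝ) : EReal)) Filter.atTop
      ≤ ((M [] : ℝ) : EReal) := by
    have h3 := Filter.liminf_le_liminf
      (u := fun n => ((M (pref ω n) : ℝ) : EReal))
      (v := fun _ => ((M [] : ℝ) : EReal)) (f := Filter.atTop)
      (Filter.Eventually.of_forall (fun n => by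
        show ((M (pref ω n) : ℝ) : EReal) ≤ ((M [] : ℝ) : EReal)
        rw [hsit n]
        exact_mod_cast hmon n))
    rwa [Filter.liminf_const] at h3
  have h4 := le_trans (hlim ω) h2
  exact_mod_cast h4

end AuxLemmas

theorem stmt_9 (Γ : ForecastingSystem) (hΓ : IsForecastingSystem Γ)
    (𝒯 : Set (Situation → ℝ)) (hcount : 𝒯.Countable)
    (htest : ∀ T ∈ 𝒯, TestSupermartingale Γ T) :
    upperProb Γ {ω : BitPath | ∃ T ∈ 𝒯, ∀ B : ℝ, ∃ n, B < T (pref ω n)} = 0 := by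
  classical
  set A := {ω : BitPath | ∃ T ∈ 𝒯, ∀ B : ℝ, ∃ n, B < T (pref ω n)} with hA
  have hc : (insert (fun _ => (1:ℝ)) 𝒯 : Set (Situation → ℝ)).Countable :=
    hcount.insert _
  obtain ⟨f, hfeq⟩ := hc.exists_eq_range ⟨_, Set.mem_insert _ _⟩
  have hfk : ∀ k, TestSupermartingale Γ (f k) := by
    intro k
    have hmem : f k ∈ insert (fun _ => (1:ℝ)) 𝒯 := hfeq ▸ Set.mem_range_self k
    rcases hmem with h | h
    · rw [h]; exact one_test Γ hΓ
    · exact htest _ h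
  unfold upperProb upperExpGlobal
  set S := {x : ℝ | ∃ M : Situation → ℝ, Supermartingale Γ M ∧ x = M [] ∧
    ∀ ω : BitPath, ((Set.indicator A (fun _ => (1:ℝ)) ω : ℝ) : EReal) ≤
      Filter.liminf (fun n => ((M (pref ω n) : ℝ) : EReal)) Filter.atTop} with hS
  have hmem : ∀ ε : ℝ, 0 < ε → ε ≤ 1 → ε ∈ S := by
    intro ε hε0 hε1
    obtain ⟨M, hMsup, hM0, hMnn, hMev⟩ := exists_super Γ hΓ f hfk hε0 hε1
    refine ⟨M, hMsup, hM0.symm, ?_⟩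
    intro ω
    by_cases hω : ω ∈ A
    · rw [Set.indicator_of_mem hω]
      obtain ⟨T, hT𝒯, hTub⟩ := hω
      have hex : ∃ k, f k = T := by
        have h5 : T ∈ insert (fun _ => (1:ℝ)) 𝒯 := Set.mem_insert_of_mem _ hT𝒯
        rwa [hfeq] at h5
      obtain ⟨k, rfl⟩ := hex
      have hev := hMev ω ⟨k, hTub⟩
      calc ((1:ℝ) : EReal) = Filter.liminf (fun _ : ℕ => ((1:ℝ) : EReal)) Filter.atTop :=
            (Filter.liminf_const _).symm
        _ ≤ _ := Filter.liminf_le_liminf (hev.mono (fun m hm => by exact_mod_cast hm))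
    · rw [Set.indicator_of_notMem hω]
      calc ((0:ℝ) : EReal) = Filter.liminf (fun _ : ℕ => ((0:ℝ) : EReal)) Filter.atTop :=
            (Filter.liminf_const _).symm
        _ ≤ _ := Filter.liminf_le_liminf
            (Filter.Eventually.of_forall (fun n => by exact_mod_cast hMnn (pref ω n)))
  have hnonneg : ∀ x ∈ S, (0:ℝ) ≤ x := by
    rintro x ⟨M, hMs, rfl, hMl⟩
    apply elem_nonneg Γ hΓ hMs
    intro ω
    refine le_trans ?_ (hMl ω)
    have h6 : (0:ℝ) ≤ Set.indicator A (fun _ => (1:ℝ)) ω :=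
      Set.indicator_nonneg (fun _ _ => zero_le_one) ω
    exact_mod_cast h6
  have hne : S.Nonempty := ⟨1, hmem 1 one_pos (le_refl 1)⟩
  have hbd : BddBelow S := ⟨0, hnonneg⟩
  apply le_antisymm
  · by_contra hcon
    push_neg at hcon
    have hε0 : 0 < min (sInf S / 2) 1 := by positivity
    have hε1 : min (sInf S / 2) 1 ≤ 1 := min_le_right _ _
    have h7 : sInf S ≤ min (sInf S / 2) 1 := csInf_le hbd (hmem _ hε0 hε1)
    have h8 : min (sInf S / 2) 1 ≤ sInf S / 2 := min_le_left _ _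
    linarith
  · exact le_csInf hne hnonneg
end
end

section
/- Let ω ∈ {0,1}^ℕ be a lawless path (lawful for no algorithm). Then liminf_{n→∞} (1/n)∑_{k=1}^{n} ω_k = 0 and limsup_{n→∞} (1/n)∑_{k=1}^{n} ω_k = 1. -/
open Filter

noncomputable section

/-!
If a bit `b` had positive lower density `ε` along `ω`, then from every position `m` the bit `b`
would recur within about `m / ε` further steps. The algorithm sending a situation `s` to its
extensions by fewer than `c |s| + N` copies of `!b` followed by one `b` is then computable,
non-trivial (the path continuing `s` with `!b` forever avoids all of them) and always followed by
`ω`, so `ω` would be lawful. Hence both bits have lower density `0`: the frequency of ones has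
`liminf` equal to `0` and, being `1` minus the frequency of zeros, `limsup` equal to `1`.
-/

namespace Lawless

@[simp] lemma length_pref (ω : BitPath) (n : ℕ) : (pref ω n).length = n := by simp [pref]

lemma pref_add (ω : BitPath) (m j : ℕ) :
    pref ω (m + j) = pref ω m ++ (List.range j).map fun i => ω (m + i) := by
  simp [pref, List.range_add]

lemma mem_cyl_append_iff {ω : BitPath} {s u : Situation} (hs : pref ω s.length = s) :
    ω ∈ cyl (s ++ u) ↔ (List.range u.length).map (fun i => ω (s.length + i)) = u := by
  simp only [cyl, Set.mem_ofPred_eq, List.length_append, pref_add, hs, List.append_cancel_left_eq]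

lemma cyl_anti {s t : Situation} (h : s <+: t) : cyl t ⊆ cyl s := by
  obtain ⟨u, rfl⟩ := h
  intro ω hω
  simp only [cyl, Set.mem_ofPred_eq, List.length_append, pref_add] at hω ⊢
  exact (List.append_inj hω (length_pref ω _)).1

def extendConst (s : Situation) (x : Bool) : BitPath := fun i => s.getD i x

lemma extendConst_mem_cyl (s : Situation) (x : Bool) : extendConst s x ∈ cyl s := by
  refine List.ext_getElem (length_pref _ _) fun i _ hi => ?_
  simp [extendConst, pref, List.getElem?_eq_getElem hi]

def hitExtensions (b : Bool) (K : ℕ) (s : Situation) : List Situation :=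
  (List.range K).map fun j => s ++ (List.replicate j (!b) ++ [b])

lemma mem_hitExtensions {b : Bool} {K : ℕ} {s t : Situation} :
    t ∈ hitExtensions b K s ↔ ∃ j < K, s ++ (List.replicate j (!b) ++ [b]) = t := by
  simp [hitExtensions]

lemma computable_hitExtensions (b : Bool) (c N : ℕ) :
    Computable fun s => hitExtensions b (c * s.length + N) s := by
  have hK : Primrec fun s : Situation => c * s.length + N :=
    Primrec.nat_add.comp (Primrec.nat_mul.comp (Primrec.const c) Primrec.list_length)
      (Primrec.const N)
  have hrun : Primrec fun j : ℕ => List.replicate j (!b) := by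
    have : (fun j : ℕ => List.replicate j (!b)) = fun j => (List.range j).map fun _ => !b := by
      funext j; simp
    rw [this]
    exact Primrec.list_map Primrec.list_range (Primrec₂.const _)
  have hext : Primrec₂ fun (s : Situation) (j : ℕ) => s ++ (List.replicate j (!b) ++ [b]) :=
    Primrec.list_append.comp Primrec.fst
      (Primrec.list_append.comp (hrun.comp Primrec.snd) (Primrec.const [b]))
  exact (Primrec.list_map (Primrec.list_range.comp hK) hext).to_comp

lemma biUnion_cyl_hitExtensions_ssubset (b : Bool) (K : ℕ) (s : Situation) :
    (⋃ t ∈ hitExtensions b K s, cyl t) ⊂ cyl s := by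
  refine Set.ssubset_iff_exists.2 ⟨Set.iUnion₂_subset fun t ht => cyl_anti ?_,
    extendConst s (!b), extendConst_mem_cyl s (!b), ?_⟩
  · obtain ⟨j, -, rfl⟩ := mem_hitExtensions.1 ht
    exact List.prefix_append _ _
  · simp only [Set.mem_iUnion, not_exists, mem_hitExtensions]
    rintro t ⟨j, -, rfl⟩ hmem
    rw [mem_cyl_append_iff (extendConst_mem_cyl s (!b))] at hmem
    have hlast := congrArg List.getLast? hmem
    simp [extendConst, List.getLast?_replicate] at hlast

lemma exists_mem_hitExtensions_of_hit {ω : BitPath} {b : Bool} {m K : ℕ}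
    (h : ∃ j < K, ω (m + j) = b) : ∃ t ∈ hitExtensions b K (pref ω m), ω ∈ cyl t := by
  have hex : ∃ j, ω (m + j) = b := h.imp fun _ hj => hj.2
  obtain ⟨j, hjK, hj⟩ := h
  refine ⟨_, mem_hitExtensions.2 ⟨Nat.find hex, (Nat.find_min' hex hj).trans_lt hjK, rfl⟩, ?_⟩
  rw [mem_cyl_append_iff (by simp)]
  simp only [List.length_append, List.length_replicate, List.length_singleton, length_pref,
    List.range_succ, List.map_append, List.map_singleton, Nat.find_spec hex]
  congr 1
  refine List.eq_replicate_iff.2 ⟨by simp, fun x hx => ?_⟩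
  obtain ⟨i, hi, rfl⟩ := List.mem_map.1 hx
  exact Bool.eq_not.2 (Nat.find_min hex (List.mem_range.1 hi))

lemma lawful_of_forall_exists_hit {ω : BitPath} {b : Bool} {c N : ℕ}
    (h : ∀ m, ∃ j < c * m + N, ω (m + j) = b) : Lawful ω := by
  refine ⟨fun s => Part.some (hitExtensions b (c * s.length + N) s),
    computable_hitExtensions b c N, fun m => ?_⟩
  obtain ⟨t, ht, hωt⟩ := exists_mem_hitExtensions_of_hit (h m)
  dsimp only
  rw [length_pref]
  refine ⟨_, Part.mem_some _, List.ne_nil_of_mem ht, ?_, ?_, t, ht, hωt⟩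
  · intro t ht
    obtain ⟨j, -, rfl⟩ := mem_hitExtensions.1 ht
    exact ⟨List.prefix_append _ _, fun heq => by simpa using congrArg List.length heq⟩
  · exact biUnion_cyl_hitExtensions_ssubset _ _ _

lemma exists_lt_of_le_mul_count {p : ℕ → Prop} [DecidablePred p] {c N : ℕ}
    (hp : ∀ n ≥ N, n ≤ c * Nat.count p n) (m : ℕ) : ∃ j < c * m + (N + 1), p (m + j) := by
  by_contra! hno
  have hwindow : Nat.count p (m + (c * m + (N + 1))) ≤ m := by
    rw [Nat.count_add, Nat.count_of_forall_not hno, add_zero]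
    exact Nat.count_le _
  have := hp (m + (c * m + (N + 1))) (by omega)
  have := Nat.mul_le_mul_left c hwindow
  omega

lemma lawful_of_eventually_mul_le_count {ω : BitPath} {b : Bool} {ε : ℝ} (hε : 0 < ε)
    (h : ∀ᶠ n in atTop, ε * n ≤ Nat.count (fun k => ω k = b) n) : Lawful ω := by
  obtain ⟨c, hc⟩ := exists_nat_gt ε⁻¹
  obtain ⟨N, hN⟩ := eventually_atTop.1 h
  refine lawful_of_forall_exists_hit
    (exists_lt_of_le_mul_count (p := fun k => ω k = b) (c := c) (N := N) fun n hn => ?_)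
  have : (n : ℝ) ≤ c * Nat.count (fun k => ω k = b) n :=
    calc (n : ℝ) = ε⁻¹ * (ε * n) := by field_simp
      _ ≤ c * Nat.count (fun k => ω k = b) n := by gcongr; exact hN n hn
  exact_mod_cast this

lemma count_true_add_count_false (ω : BitPath) (n : ℕ) :
    Nat.count (fun k => ω k = true) n + Nat.count (fun k => ω k = false) n = n := by
  induction n with
  | zero => simp
  | succ n ih => cases h : ω n <;> simp [Nat.count_succ, h] <;> omega

lemma sum_bval_eq_count (ω : BitPath) (n : ℕ) :
    ∑ k ∈ Finset.range n, bval (ω k) = Nat.count (fun k => ω k = true) n := by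
  simp [bval, Nat.count_eq_card_filter_range, Finset.sum_boole]

def frequency (ω : BitPath) (b : Bool) (n : ℕ) : ℝ := Nat.count (fun k => ω k = b) n / n

lemma frequency_nonneg (ω : BitPath) (b : Bool) (n : ℕ) : 0 ≤ frequency ω b n := by
  unfold frequency; positivity

lemma frequency_le_one (ω : BitPath) (b : Bool) (n : ℕ) : frequency ω b n ≤ 1 :=
  div_le_one_of_le₀ (by exact_mod_cast Nat.count_le _) n.cast_nonneg

lemma isBoundedUnder_ge_frequency (ω : BitPath) (b : Bool) :
    IsBoundedUnder (· ≥ ·) atTop (frequency ω b) :=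
  isBoundedUnder_of ⟨0, frequency_nonneg ω b⟩

lemma isCoboundedUnder_ge_frequency (ω : BitPath) (b : Bool) :
    IsCoboundedUnder (· ≥ ·) atTop (frequency ω b) :=
  (isBoundedUnder_of ⟨1, frequency_le_one ω b⟩).isCoboundedUnder_ge

lemma frequency_true_eq_one_sub {ω : BitPath} {n : ℕ} (hn : n ≠ 0) :
    frequency ω true n = 1 - frequency ω false n := by
  have hsum := congrArg (Nat.cast : ℕ → ℝ) (count_true_add_count_false ω n)
  push_cast at hsum
  simp only [frequency]
  field_simp
  linarith

lemma liminf_frequency_eq_zero {ω : BitPath} (hω : ¬ Lawful ω) (b : Bool) :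
    liminf (frequency ω b) atTop = 0 := by
  refine le_antisymm (not_lt.1 fun hpos => hω ?_)
    (le_liminf_of_le (isCoboundedUnder_ge_frequency ω b) (.of_forall (frequency_nonneg ω b)))
  have hev := eventually_lt_of_lt_liminf (half_lt_self hpos) (isBoundedUnder_ge_frequency ω b)
  refine lawful_of_eventually_mul_le_count (b := b) (half_pos hpos) ?_
  filter_upwards [hev, eventually_ne_atTop 0] with n hn hn0
  rw [frequency, lt_div_iff₀ (by positivity)] at hn
  exact hn.le

end Lawless

open Lawless

theorem stmt_18 (ω : BitPath) (hω : ¬ Lawful ω) :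
    Filter.liminf (fun n => (∑ k ∈ Finset.range n, bval (ω k)) / (n : ℝ))
      Filter.atTop = 0 ∧
    Filter.limsup (fun n => (∑ k ∈ Finset.range n, bval (ω k)) / (n : ℝ))
      Filter.atTop = 1 := by
  simp only [sum_bval_eq_count]
  change liminf (frequency ω true) atTop = 0 ∧ limsup (frequency ω true) atTop = 1
  refine ⟨liminf_frequency_eq_zero hω true, ?_⟩
  calc limsup (frequency ω true) atTop
      = limsup (fun n => 1 - frequency ω false n) atTop :=
        limsup_congr (eventually_ne_atTop 0 |>.mono fun _ => frequency_true_eq_one_sub)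
    _ = 1 - liminf (frequency ω false) atTop :=
        limsup_const_sub _ _ _ (isCoboundedUnder_ge_frequency ω false)
          (isBoundedUnder_ge_frequency ω false)
    _ = 1 := by rw [liminf_frequency_eq_zero hω false, sub_zero]
end
end
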